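/- For every N ≥ 2, the set of extreme points of the convex hull of V̄ (equivalently, of P̄ ∩ H̄) equals V̄ itself. -/

import Mathlib

/-!
Each `v_{p,q,j}` is the unique maximiser on `V̄` of the linear functional `x ↦ x(p,j) - x(q,j)`
(value `1`, against at most `1/2` at every other vertex). The hull of `V̄` then lies in the convex
set `{v_{p,q,j}} ∪ {x(p,j) - x(q,j) < 1}`, so removing `v_{p,q,j}` from the hull leaves a convex
set, which is one characterisation of an extreme point.
-/

/-- The vertex set `V̄` of vectors `v_{p,q,j}` with `p ≠ q`, `j ∈ {1,2}`. -/
def vertexSetVbar (N : ℕ) : Set (Fin N × Fin 2 → ℝ) :=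
  {v | ∃ p q : Fin N, ∃ j : Fin 2, p ≠ q ∧
    v = fun il => if il = (p, j) then (1 / 2 : ℝ) else if il = (q, j) then -(1 / 2 : ℝ) else 0}

section ExtremePoints

variable {𝕜 E : Type*} [Field 𝕜] [LinearOrder 𝕜] [IsStrictOrderedRing 𝕜] [AddCommGroup E]
  [Module 𝕜 E]

theorem convex_insert_setOf_lt_self (f : E →ₗ[𝕜] 𝕜) (v : E) :
    Convex 𝕜 (insert v {x | f x < f v}) := by
  have hle : ∀ x ∈ insert v {x | f x < f v}, f x ≤ f v := by
    rintro x (rfl | hx)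
    exacts [le_rfl, le_of_lt hx]
  refine convex_iff_forall_pos.2 fun x hx y hy a b ha hb hab => ?_
  by_cases hxy : x = v ∧ y = v
  · obtain ⟨rfl, rfl⟩ := hxy
    left
    rw [← add_smul, hab, one_smul]
  right
  have hstrict : f x < f v ∨ f y < f v := by
    rcases hx with rfl | hx
    · rcases hy with rfl | hy
      exacts [absurd ⟨rfl, rfl⟩ hxy, Or.inr hy]
    · exact Or.inl hx
  have hcomb : f (a • x + b • y) = a * f x + b * f y := by simp
  rw [Set.mem_ofPred_eq, hcomb]
  calc a * f x + b * f y < a * f v + b * f v := by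
        rcases hstrict with h | h
        · exact add_lt_add_of_lt_of_le (mul_lt_mul_of_pos_left h ha)
            (mul_le_mul_of_nonneg_left (hle y hy) hb.le)
        · exact add_lt_add_of_le_of_lt (mul_le_mul_of_nonneg_left (hle x hx) ha.le)
            (mul_lt_mul_of_pos_left h hb)
    _ = f v := by rw [← add_mul, hab, one_mul]

theorem mem_extremePoints_convexHull_of_forall_lt {s : Set E} {v : E} (f : E →ₗ[𝕜] 𝕜)
    (hv : v ∈ s) (hlt : ∀ w ∈ s, w ≠ v → f w < f v) :
    v ∈ (convexHull 𝕜 s).extremePoints 𝕜 := by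
  have hsub : convexHull 𝕜 s ⊆ insert v {x | f x < f v} :=
    convexHull_min (fun w hw => (eq_or_ne w v).imp id (hlt w hw))
      (convex_insert_setOf_lt_self f v)
  rw [(convex_convexHull 𝕜 s).mem_extremePoints_iff_convex_sdiff]
  refine ⟨subset_convexHull 𝕜 s hv, ?_⟩
  have hsdiff : convexHull 𝕜 s \ {v} = convexHull 𝕜 s ∩ {x | f x < f v} := by
    ext x
    refine ⟨fun ⟨hx, hxv⟩ => ⟨hx, (hsub hx).resolve_left hxv⟩, fun ⟨hx, hfx⟩ => ⟨hx, ?_⟩⟩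
    rintro rfl
    exact lt_irrefl _ hfx
  rw [hsdiff]
  exact (convex_convexHull 𝕜 s).inter (convex_halfSpace_lt f.isLinear (f v))

end ExtremePoints

section HalfDiff

variable {κ : Type*} [DecidableEq κ]

noncomputable def halfDiff (a b : κ) : κ → ℝ :=
  fun i => if i = a then (1 / 2 : ℝ) else if i = b then -(1 / 2 : ℝ) else 0

theorem halfDiff_apply_sub_apply_self {a b : κ} (hab : a ≠ b) :
    halfDiff a b a - halfDiff a b b = 1 := by
  norm_num [halfDiff, hab.symm]

theorem halfDiff_apply_sub_apply_lt_one {a b a' b' : κ} (h : ¬(a' = a ∧ b' = b)) :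
    halfDiff a' b' a - halfDiff a' b' b < 1 := by
  unfold halfDiff
  split_ifs with ha hb' hb <;> norm_num
  exact h ⟨ha.symm, hb.symm⟩

end HalfDiff

theorem extremePoints_convexHull_Vbar_general (N : ℕ) :
    Set.extremePoints ℝ (convexHull ℝ (vertexSetVbar N)) = vertexSetVbar N := by
  refine subset_antisymm extremePoints_convexHull_subset ?_
  rintro _ ⟨p, q, j, hpq, rfl⟩
  have hpj : (p, j) ≠ (q, j) := by simpa using hpq
  let f : (Fin N × Fin 2 → ℝ) →ₗ[ℝ] ℝ :=
    LinearMap.proj (R := ℝ) (φ := fun _ => ℝ) (p, j) - LinearMap.proj (q, j)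
  refine mem_extremePoints_convexHull_of_forall_lt f ⟨p, q, j, hpq, rfl⟩ ?_
  rintro _ ⟨p', q', j', -, rfl⟩ hne
  change halfDiff (p', j') (q', j') (p, j) - halfDiff (p', j') (q', j') (q, j)
    < halfDiff (p, j) (q, j) (p, j) - halfDiff (p, j) (q, j) (q, j)
  rw [halfDiff_apply_sub_apply_self hpj]
  exact halfDiff_apply_sub_apply_lt_one fun ⟨hp, hq⟩ => hne (by rw [hp, hq])

theorem extremePoints_convexHull_Vbar (N : ℕ) (hN : 2 ≤ N) :
    Set.extremePoints ℝ (convexHull ℝ (vertexSetVbar N)) = vertexSetVbar N :=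
  extremePoints_convexHull_Vbar_general N
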